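/- Let k be a field and let R_1 = k[X,Y,Z]/(X^{n_1}Y - Z² - Z), R_2 = k[X,Y,Z]/(X^{n_2}Y - Z² - Z) with 2 ≤ n_1 < n_2 ≤ 2n_1. Then the polynomial rings R_1[T] and R_2[T] are isomorphic as k-algebras. In particular, R_2[T] = R_1[s] where, under the embedding of R_1 into R_2[T] given by x_1 ↦ x, z_1 ↦ z_2 + x^{n_1}T, y_1 ↦ x^{n_2-n_1}y_2 + (2z_2+1)T + x^{n_1}T², one has s = -x^{3n_1-n_2}·4T³ + 3x^{2n_1-n_2}(2z_1+1)T² + 4x^{n_1}y_2T + y_2(2z_1+1). -/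

import Mathlib

set_option maxHeartbeats 1600000
set_option synthInstance.maxHeartbeats 400000


noncomputable section

/-- The defining relation `XⁿY - Z² - h(X)Z` in `k[X,Y,Z]` (variables `X 0, X 1, X 2`). -/
def danRel (k : Type*) [Field k] (n : ℕ) (h : Polynomial k) : MvPolynomial (Fin 3) k :=
  MvPolynomial.X 0 ^ n * MvPolynomial.X 1 - MvPolynomial.X 2 ^ 2
    - Polynomial.aeval (MvPolynomial.X 0 : MvPolynomial (Fin 3) k) h * MvPolynomial.X 2

/-- The coordinate ring `R = k[X,Y,Z]/(XⁿY - Z² - h(X)Z)` of a Danielewski surface. -/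
abbrev DanRing (k : Type*) [Field k] (n : ℕ) (h : Polynomial k) : Type _ :=
  MvPolynomial (Fin 3) k ⧸ Ideal.span {danRel k n h}

/-- The image `x` of `X` in `R`. -/
def dx (k : Type*) [Field k] (n : ℕ) (h : Polynomial k) : DanRing k n h :=
  Ideal.Quotient.mk _ (MvPolynomial.X 0)

/-- The image `y` of `Y` in `R`. -/
def dy (k : Type*) [Field k] (n : ℕ) (h : Polynomial k) : DanRing k n h :=
  Ideal.Quotient.mk _ (MvPolynomial.X 1)

/-- The image `z` of `Z` in `R`. -/
def dz (k : Type*) [Field k] (n : ℕ) (h : Polynomial k) : DanRing k n h :=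
  Ideal.Quotient.mk _ (MvPolynomial.X 2)

section Aux

open Polynomial

variable (k : Type*) [Field k]

lemma mk_x (n : ℕ) :
    (Ideal.Quotient.mk (Ideal.span {danRel k n 1}) (MvPolynomial.X 0)) = dx k n 1 := rfl

lemma mk_y (n : ℕ) :
    (Ideal.Quotient.mk (Ideal.span {danRel k n 1}) (MvPolynomial.X 1)) = dy k n 1 := rfl

lemma mk_z (n : ℕ) :
    (Ideal.Quotient.mk (Ideal.span {danRel k n 1}) (MvPolynomial.X 2)) = dz k n 1 := rfl

lemma dan_rel (n : ℕ) : dx k n 1 ^ n * dy k n 1 = dz k n 1 ^ 2 + dz k n 1 := by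
  have h0 : (Ideal.Quotient.mk (Ideal.span {danRel k n 1})
      (MvPolynomial.X 0 ^ n * MvPolynomial.X 1 - MvPolynomial.X 2 ^ 2
        - Polynomial.aeval (MvPolynomial.X 0 : MvPolynomial (Fin 3) k) (1 : Polynomial k)
          * MvPolynomial.X 2)) = 0 :=
    Ideal.Quotient.eq_zero_iff_mem.mpr (Ideal.subset_span rfl)
  simp only [map_sub, map_mul, map_pow, map_one, Polynomial.aeval_one,
    mk_x, mk_y, mk_z, one_mul] at h0
  linear_combination h0

lemma dan_relC (n : ℕ) :
    (Polynomial.C (dx k n 1)) ^ n * Polynomial.C (dy k n 1)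
      = (Polynomial.C (dz k n 1)) ^ 2 + Polynomial.C (dz k n 1) := by
  have h1 := dan_rel k n
  calc (Polynomial.C (dx k n 1)) ^ n * Polynomial.C (dy k n 1)
      = Polynomial.C (dx k n 1 ^ n * dy k n 1) := by rw [map_mul, map_pow]
    _ = Polynomial.C (dz k n 1 ^ 2 + dz k n 1) := by rw [h1]
    _ = _ := by rw [map_add, map_pow]

variable (m p : ℕ)

/-- Images of the three generators of `R₁` in `R₂[T]`. -/
def gf : Fin 3 → Polynomial (DanRing k (m+p+m) 1) :=
  ![Polynomial.C (dx k (m+p+m) 1),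
    Polynomial.C (dx k (m+p+m) 1 ^ (m) * dy k (m+p+m) 1) +
        Polynomial.C (2 * dz k (m+p+m) 1 + 1) * Polynomial.X +
        Polynomial.C (dx k (m+p+m) 1 ^ (m+p)) * Polynomial.X ^ 2,
    Polynomial.C (dz k (m+p+m) 1) + Polynomial.C (dx k (m+p+m) 1 ^ (m+p)) * Polynomial.X]

/-- The embedding `ι : R₁ → R₂[T]`. -/
def iotaMap : DanRing k (m+p) 1 →ₐ[k] Polynomial (DanRing k (m+p+m) 1) :=
  Ideal.Quotient.liftₐ _ (MvPolynomial.aeval (gf k m p)) (by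
    intro a ha
    rw [Ideal.mem_span_singleton] at ha
    obtain ⟨c, rfl⟩ := ha
    rw [map_mul]
    have h : (MvPolynomial.aeval (gf k m p)) (danRel k (m+p) 1) = 0 := by
      simp only [danRel, map_sub, map_mul, map_pow, map_one, map_ofNat, Polynomial.aeval_one,
        MvPolynomial.aeval_X, gf, Matrix.cons_val_zero, Matrix.cons_val_one, Matrix.head_cons,
        Matrix.cons_val_two, Matrix.tail_cons, one_mul, map_add]
      linear_combination dan_relC k (m+p+m)
    rw [h, zero_mul])

lemma iota_mk (q : MvPolynomial (Fin 3) k) :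
    iotaMap k m p (Ideal.Quotient.mk _ q) = MvPolynomial.aeval (gf k m p) q := by
  simp [iotaMap, Ideal.Quotient.liftₐ_apply, Ideal.Quotient.lift_mk]
  rfl

lemma iota_x : iotaMap k m p (dx k (m+p) 1) = Polynomial.C (dx k (m+p+m) 1) := by
  rw [dx, iota_mk]; simp [gf]

lemma iota_y : iotaMap k m p (dy k (m+p) 1) =
    Polynomial.C (dx k (m+p+m) 1 ^ (m) * dy k (m+p+m) 1) +
      Polynomial.C (2 * dz k (m+p+m) 1 + 1) * Polynomial.X +
      Polynomial.C (dx k (m+p+m) 1 ^ (m+p)) * Polynomial.X ^ 2 := by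
  rw [dy, iota_mk]; simp [gf]

lemma iota_z : iotaMap k m p (dz k (m+p) 1) =
    Polynomial.C (dz k (m+p+m) 1) + Polynomial.C (dx k (m+p+m) 1 ^ (m+p)) * Polynomial.X := by
  rw [dz, iota_mk]; simp [gf]

/-- The element `s ∈ R₂[T]`. -/
def sElt : Polynomial (DanRing k (m+p+m) 1) :=
  -(4 * Polynomial.C (dx k (m+p+m) 1 ^ (m + 2*p)) * Polynomial.X ^ 3) +
    3 * Polynomial.C (dx k (m+p+m) 1 ^ p) *
      (2 * (Polynomial.C (dz k (m+p+m) 1) +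
        Polynomial.C (dx k (m+p+m) 1 ^ (m+p)) * Polynomial.X) + 1) * Polynomial.X ^ 2 +
    4 * Polynomial.C (dx k (m+p+m) 1 ^ (m+p) * dy k (m+p+m) 1) * Polynomial.X +
    Polynomial.C (dy k (m+p+m) 1) *
      (2 * (Polynomial.C (dz k (m+p+m) 1) +
        Polynomial.C (dx k (m+p+m) 1 ^ (m+p)) * Polynomial.X) + 1)

/-- `φ : R₁[T] → R₂[T]`. -/
def phiMap : Polynomial (DanRing k (m+p) 1) →ₐ[k] Polynomial (DanRing k (m+p+m) 1) :=
  Polynomial.aevalTower (iotaMap k m p) (sElt k m p)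

/-- The element `u = β⁻¹(T) ∈ R₁[T]`. -/
def uElt : Polynomial (DanRing k (m+p) 1) :=
  (2 * Polynomial.C (dz k (m+p) 1) + 1) * Polynomial.C (dy k (m+p) 1)
    - Polynomial.C (dx k (m+p) 1) ^ m * Polynomial.X

/-- `ψ(z₂)`. -/
def psz2 : Polynomial (DanRing k (m+p) 1) :=
  Polynomial.C (dz k (m+p) 1) - Polynomial.C (dx k (m+p) 1) ^ (m+p) * uElt k m p

/-- `ψ(y₂)`, auxiliary piece `E`. -/
def psEh : Polynomial (DanRing k (m+p) 1) :=
  Polynomial.X - 2 * Polynomial.C (dx k (m+p) 1) ^ (m+2*p) * uElt k m p ^ 3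
    + 3 * Polynomial.C (dx k (m+p) 1) ^ p * (2 * Polynomial.C (dz k (m+p) 1) + 1) * uElt k m p ^ 2
    - 6 * Polynomial.C (dx k (m+p) 1) ^ p * Polynomial.C (dy k (m+p) 1) * uElt k m p

/-- `ψ(y₂)`, auxiliary piece `G`. -/
def psGh : Polynomial (DanRing k (m+p) 1) :=
  Polynomial.C (dy k (m+p) 1) - (2 * psz2 k m p + 1) * uElt k m p
    - Polynomial.C (dx k (m+p) 1) ^ (m+p) * uElt k m p ^ 2

/-- `ψ(y₂)`. -/
def psy2 : Polynomial (DanRing k (m+p) 1) :=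
  (2 * psz2 k m p + 1) * psEh k m p - 4 * Polynomial.C (dx k (m+p) 1) ^ p * psGh k m p ^ 2

/-- Images of the three generators of `R₂` in `R₁[T]`. -/
def gf' : Fin 3 → Polynomial (DanRing k (m+p) 1) :=
  ![Polynomial.C (dx k (m+p) 1), psy2 k m p, psz2 k m p]

/-- The embedding `ι' : R₂ → R₁[T]`. -/
def iotaMap' : DanRing k (m+p+m) 1 →ₐ[k] Polynomial (DanRing k (m+p) 1) :=
  Ideal.Quotient.liftₐ _ (MvPolynomial.aeval (gf' k m p)) (by
    intro a ha
    rw [Ideal.mem_span_singleton] at ha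
    obtain ⟨c, rfl⟩ := ha
    rw [map_mul]
    have h : (MvPolynomial.aeval (gf' k m p)) (danRel k (m+p+m) 1) = 0 := by
      simp only [danRel, map_sub, map_mul, map_pow, map_one, map_ofNat, Polynomial.aeval_one,
        MvPolynomial.aeval_X, gf', psy2, psz2, psEh, psGh, uElt,
        Matrix.cons_val_zero, Matrix.cons_val_one, Matrix.head_cons,
        Matrix.cons_val_two, Matrix.tail_cons, one_mul, map_add]
      linear_combination ((1 : Polynomial (DanRing k (m+p) 1)) + (-4 : Polynomial (DanRing k (m+p) 1)) * Polynomial.C (dx k (m+p) 1) ^ (1*m+1*p) * Polynomial.C (dy k (m+p) 1) ^ 1 + (4 : Polynomial (DanRing k (m+p) 1)) * Polynomial.C (dx k (m+p) 1) ^ (2*m+2*p) * Polynomial.C (dy k (m+p) 1) ^ 2 + (16 : Polynomial (DanRing k (m+p) 1)) * Polynomial.C (dx k (m+p) 1) ^ (2*m+2*p) * Polynomial.C (dy k (m+p) 1) ^ 2 * Polynomial.C (dz k (m+p) 1) ^ 1 + (16 : Polynomial (DanRing k (m+p) 1)) * Polynomial.C (dx k (m+p) 1) ^ (2*m+2*p)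 * Polynomial.C (dy k (m+p) 1) ^ 2 * Polynomial.C (dz k (m+p) 1) ^ 2 + (-8 : Polynomial (DanRing k (m+p) 1)) * Polynomial.C (dx k (m+p) 1) ^ (3*m+2*p) * Polynomial.C (dy k (m+p) 1) ^ 1 * Polynomial.X ^ 1 + (-16 : Polynomial (DanRing k (m+p) 1)) * Polynomial.C (dx k (m+p) 1) ^ (3*m+2*p) * Polynomial.C (dy k (m+p) 1) ^ 1 * Polynomial.C (dz k (m+p) 1) ^ 1 * Polynomial.X ^ 1 + (4 : Polynomial (DanRing k (m+p) 1)) * Polynomial.C (dx k (m+p) 1) ^ (4*m+2*p) * Polynomial.X ^ 2) * dan_relC k (m+p)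
    rw [h, zero_mul])

lemma iota'_mk (q : MvPolynomial (Fin 3) k) :
    iotaMap' k m p (Ideal.Quotient.mk _ q) = MvPolynomial.aeval (gf' k m p) q := by
  simp [iotaMap', Ideal.Quotient.liftₐ_apply, Ideal.Quotient.lift_mk]
  rfl

lemma iota'_x : iotaMap' k m p (dx k (m+p+m) 1) = Polynomial.C (dx k (m+p) 1) := by
  rw [dx, iota'_mk]; simp [gf']

lemma iota'_y : iotaMap' k m p (dy k (m+p+m) 1) = psy2 k m p := by
  rw [dy, iota'_mk]; simp [gf']

lemma iota'_z : iotaMap' k m p (dz k (m+p+m) 1) = psz2 k m p := by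
  rw [dz, iota'_mk]; simp [gf']

/-- `ψ : R₂[T] → R₁[T]`. -/
def psiMap : Polynomial (DanRing k (m+p+m) 1) →ₐ[k] Polynomial (DanRing k (m+p) 1) :=
  Polynomial.aevalTower (iotaMap' k m p) (uElt k m p)

lemma phi_comp_psi : (phiMap k m p).comp (psiMap k m p) = AlgHom.id k _ := by
  apply Polynomial.algHom_ext'
  · apply Ideal.Quotient.algHom_ext
    apply MvPolynomial.algHom_ext
    intro i
    fin_cases i
    · beta_reduce
      simp only [AlgHom.comp_apply, Ideal.Quotient.mkₐ_eq_mk, Polynomial.CAlgHom_apply,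
        AlgHom.id_apply, psiMap, phiMap, Polynomial.aevalTower_C, Polynomial.aevalTower_X,
        iota_mk, iota'_mk, iota_x, iota_y, iota_z, iota'_x, iota'_y, iota'_z,
        MvPolynomial.aeval_X, Fin.zero_eta, Fin.mk_one, Fin.reduceFinMk,
        Matrix.cons_val_zero, Matrix.cons_val_one, Matrix.head_cons, Matrix.cons_val_two,
        Matrix.tail_cons, map_add, map_sub, map_mul, map_pow, map_one, map_ofNat, map_neg,
        gf, gf', Polynomial.C_1]
      simp only [mk_x, mk_y, mk_z]
    · beta_reduce
      simp only [AlgHom.comp_apply, Ideal.Quotient.mkₐ_eq_mk, Polynomial.CAlgHom_apply,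
        AlgHom.id_apply, psiMap, phiMap, Polynomial.aevalTower_C, Polynomial.aevalTower_X,
        iota_mk, iota'_mk, iota_x, iota_y, iota_z, iota'_x, iota'_y, iota'_z,
        MvPolynomial.aeval_X, Fin.zero_eta, Fin.mk_one, Fin.reduceFinMk,
        Matrix.cons_val_zero, Matrix.cons_val_one, Matrix.head_cons, Matrix.cons_val_two,
        Matrix.tail_cons, map_add, map_sub, map_mul, map_pow, map_one, map_ofNat, map_neg,
        gf, gf', Polynomial.C_1]
      simp only [psy2, psz2, psEh, psGh, uElt, map_add, map_sub, map_mul, map_pow, map_one,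
        map_ofNat, map_neg, iota_x, iota_y, iota_z, Polynomial.aevalTower_C,
        Polynomial.aevalTower_X, phiMap, psiMap, sElt]
      simp only [mk_x, mk_y, mk_z]
      linear_combination ((-4 : Polynomial (DanRing k (m+p+m) 1)) * Polynomial.C (dy k (m+p+m) 1) ^ 1 + (16 : Polynomial (DanRing k (m+p+m) 1)) * Polynomial.C (dx k (m+p+m) 1) ^ (0*m+1*p) * Polynomial.C (dz k (m+p+m) 1) ^ 1 * Polynomial.X ^ 2 + (80 : Polynomial (DanRing k (m+p+m) 1)) * Polynomial.C (dx k (m+p+m) 1) ^ (0*m+1*p) * Polynomial.C (dz k (m+p+m) 1) ^ 2 * Polynomial.X ^ 2 + (128 : Polynomial (DanRing k (m+p+m) 1)) * Polynomial.C (dx k (m+p+m) 1) ^ (0*m+1*p) * Polynomial.C (dz k (m+p+m) 1) ^ 3 * Polynomial.X ^ 2 + (64 : Polynomial (DanRing k (m+p+m) 1)) * Polynomial.C (dx k (m+p+m) 1) ^ (0*m+1*p) * Polynomial.C (dz k (m+p+m) 1) ^ 4 * Polynomial.X ^ 2 + (-16 : Polynomial (DanRing k (m+p+m) 1)) * Polynomial.C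 (dx k (m+p+m) 1) ^ (2*m+2*p) * Polynomial.C (dy k (m+p+m) 1) ^ 1 * Polynomial.X ^ 2 + (-128 : Polynomial (DanRing k (m+p+m) 1)) * Polynomial.C (dx k (m+p+m) 1) ^ (2*m+2*p) * Polynomial.C (dy k (m+p+m) 1) ^ 1 * Polynomial.C (dz k (m+p+m) 1) ^ 1 * Polynomial.X ^ 2 + (-128 : Polynomial (DanRing k (m+p+m) 1)) * Polynomial.C (dx k (m+p+m) 1) ^ (2*m+2*p) * Polynomial.C (dy k (m+p+m) 1) ^ 1 * Polynomial.C (dz k (m+p+m) 1) ^ 2 * Polynomial.X ^ 2 + (64 : Polynomial (DanRing k (m+p+m) 1)) * Polynomial.C (dx k (m+p+m) 1) ^ (4*m+3*p) * Polynomial.C (dy k (m+p+m) 1) ^ 2 * Polynomial.X ^ 2) * dan_relC k (m+p+m)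
    · beta_reduce
      simp only [AlgHom.comp_apply, Ideal.Quotient.mkₐ_eq_mk, Polynomial.CAlgHom_apply,
        AlgHom.id_apply, psiMap, phiMap, Polynomial.aevalTower_C, Polynomial.aevalTower_X,
        iota_mk, iota'_mk, iota_x, iota_y, iota_z, iota'_x, iota'_y, iota'_z,
        MvPolynomial.aeval_X, Fin.zero_eta, Fin.mk_one, Fin.reduceFinMk,
        Matrix.cons_val_zero, Matrix.cons_val_one, Matrix.head_cons, Matrix.cons_val_two,
        Matrix.tail_cons, map_add, map_sub, map_mul, map_pow, map_one, map_ofNat, map_neg,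
        gf, gf', Polynomial.C_1]
      simp only [psz2, uElt, map_add, map_sub, map_mul, map_pow, map_one,
        map_ofNat, map_neg, iota_x, iota_y, iota_z, Polynomial.aevalTower_C,
        Polynomial.aevalTower_X, phiMap, psiMap, sElt]
      simp only [mk_x, mk_y, mk_z]
      linear_combination ((4 : Polynomial (DanRing k (m+p+m) 1)) * Polynomial.C (dx k (m+p+m) 1) ^ (1*m+1*p) * Polynomial.X ^ 1) * dan_relC k (m+p+m)
  · simp only [AlgHom.comp_apply, AlgHom.id_apply, psiMap, phiMap,
      Polynomial.aevalTower_C, Polynomial.aevalTower_X, uElt, map_add, map_sub, map_mul,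
      map_pow, map_one, map_ofNat, iota_x, iota_y, iota_z, sElt]
    linear_combination ((-4 : Polynomial (DanRing k (m+p+m) 1)) * Polynomial.X ^ 1) * dan_relC k (m+p+m)

lemma psi_comp_phi : (psiMap k m p).comp (phiMap k m p) = AlgHom.id k _ := by
  apply Polynomial.algHom_ext'
  · apply Ideal.Quotient.algHom_ext
    apply MvPolynomial.algHom_ext
    intro i
    fin_cases i
    · beta_reduce
      simp only [AlgHom.comp_apply, Ideal.Quotient.mkₐ_eq_mk, Polynomial.CAlgHom_apply,
        AlgHom.id_apply, psiMap, phiMap, Polynomial.aevalTower_C, Polynomial.aevalTower_X,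
        iota_mk, iota'_mk, iota_x, iota_y, iota_z, iota'_x, iota'_y, iota'_z,
        MvPolynomial.aeval_X, Fin.zero_eta, Fin.mk_one, Fin.reduceFinMk,
        Matrix.cons_val_zero, Matrix.cons_val_one, Matrix.head_cons, Matrix.cons_val_two,
        Matrix.tail_cons, map_add, map_sub, map_mul, map_pow, map_one, map_ofNat, map_neg,
        gf, gf', Polynomial.C_1]
      simp only [mk_x, mk_y, mk_z]
    · beta_reduce
      simp only [AlgHom.comp_apply, Ideal.Quotient.mkₐ_eq_mk, Polynomial.CAlgHom_apply,
        AlgHom.id_apply, psiMap, phiMap, Polynomial.aevalTower_C, Polynomial.aevalTower_X,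
        iota_mk, iota'_mk, iota_x, iota_y, iota_z, iota'_x, iota'_y, iota'_z,
        MvPolynomial.aeval_X, Fin.zero_eta, Fin.mk_one, Fin.reduceFinMk,
        Matrix.cons_val_zero, Matrix.cons_val_one, Matrix.head_cons, Matrix.cons_val_two,
        Matrix.tail_cons, map_add, map_sub, map_mul, map_pow, map_one, map_ofNat, map_neg,
        gf, gf', Polynomial.C_1]
      simp only [psy2, psz2, psEh, psGh, uElt, map_add, map_sub, map_mul, map_pow, map_one,
        map_ofNat, map_neg, iota'_x, iota'_y, iota'_z, Polynomial.aevalTower_C,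
        Polynomial.aevalTower_X, phiMap, psiMap]
      simp only [mk_x, mk_y, mk_z]
      linear_combination ((-4 : Polynomial (DanRing k (m+p) 1)) * Polynomial.C (dy k (m+p) 1) ^ 1 + (4 : Polynomial (DanRing k (m+p) 1)) * Polynomial.C (dx k (m+p) 1) ^ (1*m+1*p) * Polynomial.C (dy k (m+p) 1) ^ 2 + (16 : Polynomial (DanRing k (m+p) 1)) * Polynomial.C (dx k (m+p) 1) ^ (1*m+1*p) * Polynomial.C (dy k (m+p) 1) ^ 2 * Polynomial.C (dz k (m+p) 1) ^ 1 + (16 : Polynomial (DanRing k (m+p) 1)) * Polynomial.C (dx k (m+p) 1) ^ (1*m+1*p) * Polynomial.C (dy k (m+p) 1) ^ 2 * Polynomial.C (dz k (m+p) 1) ^ 2 + (-8 : Polynomial (DanRing k (m+p) 1)) * Polynomial.C (dx k (m+p) 1) ^ (2*m+1*p) * Polynomial.C (dy k (m+p) 1) ^ 1 * Polynomial.X ^ 1 + (-16 : Polynomial (DanRing k (m+p) 1)) * Polynomial.C (dx k (m+p) 1) ^ (2*m+1*p) * Polynomial.C (dy k (m+p) 1) ^ 1 * Polynomial.C (dz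 k (m+p) 1) ^ 1 * Polynomial.X ^ 1 + (4 : Polynomial (DanRing k (m+p) 1)) * Polynomial.C (dx k (m+p) 1) ^ (3*m+1*p) * Polynomial.X ^ 2) * dan_relC k (m+p)
    · beta_reduce
      simp only [AlgHom.comp_apply, Ideal.Quotient.mkₐ_eq_mk, Polynomial.CAlgHom_apply,
        AlgHom.id_apply, psiMap, phiMap, Polynomial.aevalTower_C, Polynomial.aevalTower_X,
        iota_mk, iota'_mk, iota_x, iota_y, iota_z, iota'_x, iota'_y, iota'_z,
        MvPolynomial.aeval_X, Fin.zero_eta, Fin.mk_one, Fin.reduceFinMk,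
        Matrix.cons_val_zero, Matrix.cons_val_one, Matrix.head_cons, Matrix.cons_val_two,
        Matrix.tail_cons, map_add, map_sub, map_mul, map_pow, map_one, map_ofNat, map_neg,
        gf, gf', Polynomial.C_1]
      simp only [psz2, uElt, map_add, map_sub, map_mul, map_pow, map_one,
        map_ofNat, map_neg, iota'_x, iota'_y, iota'_z, Polynomial.aevalTower_C,
        Polynomial.aevalTower_X, phiMap, psiMap]
      simp only [mk_x, mk_y, mk_z]
      linear_combination (0 : Polynomial (DanRing k (m+p) 1)) * dan_relC k (m+p)
  · simp only [AlgHom.comp_apply, AlgHom.id_apply, psiMap, phiMap,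
      Polynomial.aevalTower_C, Polynomial.aevalTower_X, sElt, map_add, map_sub, map_mul,
      map_pow, map_one, map_ofNat, map_neg, iota'_x, iota'_y, iota'_z, psy2, psz2,
      psEh, psGh, uElt]
    linear_combination ((-4 : Polynomial (DanRing k (m+p) 1)) * Polynomial.X ^ 1 + (-12 : Polynomial (DanRing k (m+p) 1)) * Polynomial.C (dx k (m+p) 1) ^ (0*m+1*p) * Polynomial.C (dy k (m+p) 1) ^ 2 + (-8 : Polynomial (DanRing k (m+p) 1)) * Polynomial.C (dx k (m+p) 1) ^ (0*m+1*p) * Polynomial.C (dy k (m+p) 1) ^ 2 * Polynomial.C (dz k (m+p) 1) ^ 1 + (48 : Polynomial (DanRing k (m+p) 1)) * Polynomial.C (dx k (m+p) 1) ^ (0*m+1*p) * Polynomial.C (dy k (m+p) 1) ^ 2 * Polynomial.C (dz k (m+p) 1) ^ 2 + (32 : Polynomial (DanRing k (m+p) 1)) * Polynomial.C (dx k (m+p) 1) ^ (0*m+1*p) * Polynomial.C (dy k (m+p) 1) ^ 2 * Polynomial.C (dz k (m+p) 1) ^ 3 + (8 : Polynomial (DanRing k (m+p) 1)) * Polynomial.C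 (dx k (m+p) 1) ^ (1*m+1*p) * Polynomial.C (dy k (m+p) 1) ^ 1 * Polynomial.X ^ 1 + (-32 : Polynomial (DanRing k (m+p) 1)) * Polynomial.C (dx k (m+p) 1) ^ (1*m+1*p) * Polynomial.C (dy k (m+p) 1) ^ 1 * Polynomial.C (dz k (m+p) 1) ^ 1 * Polynomial.X ^ 1 + (-32 : Polynomial (DanRing k (m+p) 1)) * Polynomial.C (dx k (m+p) 1) ^ (1*m+1*p) * Polynomial.C (dy k (m+p) 1) ^ 1 * Polynomial.C (dz k (m+p) 1) ^ 2 * Polynomial.X ^ 1 + (16 : Polynomial (DanRing k (m+p) 1)) * Polynomial.C (dx k (m+p) 1) ^ (1*m+2*p) * Polynomial.C (dy k (m+p) 1) ^ 3 + (96 : Polynomial (DanRing k (m+p) 1)) * Polynomial.C (dx k (m+p) 1) ^ (1*m+2*p) * Polynomial.C (dy k (m+p) 1) ^ 3 * Polynomial.C (dz k (m+p) 1) ^ 1 + (192 : Polynomial (DanRing k (m+p) 1)) * Polynomial.C (dx k (m+p) 1) ^ (1*m+2*p) * Polynomial.C (dy k (m+p) 1) ^ 3 * Polynomial.C (dz k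 (m+p) 1) ^ 2 + (128 : Polynomial (DanRing k (m+p) 1)) * Polynomial.C (dx k (m+p) 1) ^ (1*m+2*p) * Polynomial.C (dy k (m+p) 1) ^ 3 * Polynomial.C (dz k (m+p) 1) ^ 3 + (4 : Polynomial (DanRing k (m+p) 1)) * Polynomial.C (dx k (m+p) 1) ^ (2*m+1*p) * Polynomial.X ^ 2 + (8 : Polynomial (DanRing k (m+p) 1)) * Polynomial.C (dx k (m+p) 1) ^ (2*m+1*p) * Polynomial.C (dz k (m+p) 1) ^ 1 * Polynomial.X ^ 2 + (-48 : Polynomial (DanRing k (m+p) 1)) * Polynomial.C (dx k (m+p) 1) ^ (2*m+2*p) * Polynomial.C (dy k (m+p) 1) ^ 2 * Polynomial.X ^ 1 + (-192 : Polynomial (DanRing k (m+p) 1)) * Polynomial.C (dx k (m+p) 1) ^ (2*m+2*p) * Polynomial.C (dy k (m+p) 1) ^ 2 * Polynomial.C (dz k (m+p) 1) ^ 1 * Polynomial.X ^ 1 + (-192 : Polynomial (DanRing k (m+p) 1)) * Polynomial.C (dx k (m+p) 1) ^ (2*m+2*p) * Polynomial.C (dy k (m+p) 1) ^ 2 * Polynomial.C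 (dz k (m+p) 1) ^ 2 * Polynomial.X ^ 1 + (48 : Polynomial (DanRing k (m+p) 1)) * Polynomial.C (dx k (m+p) 1) ^ (3*m+2*p) * Polynomial.C (dy k (m+p) 1) ^ 1 * Polynomial.X ^ 2 + (96 : Polynomial (DanRing k (m+p) 1)) * Polynomial.C (dx k (m+p) 1) ^ (3*m+2*p) * Polynomial.C (dy k (m+p) 1) ^ 1 * Polynomial.C (dz k (m+p) 1) ^ 1 * Polynomial.X ^ 2 + (-16 : Polynomial (DanRing k (m+p) 1)) * Polynomial.C (dx k (m+p) 1) ^ (4*m+2*p) * Polynomial.X ^ 3) * dan_relC k (m+p)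

end Aux

/-- For `2 ≤ n₁ < n₂ ≤ 2n₁` and `R_i = k[X,Y,Z]/(X^{n_i}Y - Z² - Z)`, the cylinders
`R₁[T]` and `R₂[T]` are isomorphic; indeed, along the embedding `ι : R₁ → R₂[T]`,
`x₁ ↦ x₂`, `z₁ ↦ z₂ + x^{n₁}T`, `y₁ ↦ x^{n₂-n₁}y₂ + (2z₂+1)T + x^{n₁}T²`,
one has `R₂[T] = R₁[s]` with
`s = -4x^{3n₁-n₂}T³ + 3x^{2n₁-n₂}(2z₁+1)T² + 4x^{n₁}y₂T + y₂(2z₁+1)`. -/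
theorem stmt_18 (k : Type*) [Field k] (n₁ n₂ : ℕ)
    (hn₁ : 2 ≤ n₁) (h12 : n₁ < n₂) (h21 : n₂ ≤ 2 * n₁) :
    ∃ ι : DanRing k n₁ 1 →ₐ[k] Polynomial (DanRing k n₂ 1),
      ι (dx k n₁ 1) = Polynomial.C (dx k n₂ 1) ∧
      ι (dz k n₁ 1) = Polynomial.C (dz k n₂ 1) +
        Polynomial.C (dx k n₂ 1 ^ n₁) * Polynomial.X ∧
      ι (dy k n₁ 1) = Polynomial.C (dx k n₂ 1 ^ (n₂ - n₁) * dy k n₂ 1) +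
        Polynomial.C (2 * dz k n₂ 1 + 1) * Polynomial.X +
        Polynomial.C (dx k n₂ 1 ^ n₁) * Polynomial.X ^ 2 ∧
      ∃ β : Polynomial (DanRing k n₁ 1) ≃ₐ[k] Polynomial (DanRing k n₂ 1),
        (∀ r : DanRing k n₁ 1, β (Polynomial.C r) = ι r) ∧
        β Polynomial.X =
          -(4 * Polynomial.C (dx k n₂ 1 ^ (3 * n₁ - n₂)) * Polynomial.X ^ 3) +
          3 * Polynomial.C (dx k n₂ 1 ^ (2 * n₁ - n₂)) *
            (2 * ι (dz k n₁ 1) + 1) * Polynomial.X ^ 2 +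
          4 * Polynomial.C (dx k n₂ 1 ^ n₁ * dy k n₂ 1) * Polynomial.X +
          Polynomial.C (dy k n₂ 1) * (2 * ι (dz k n₁ 1) + 1) := by
  obtain ⟨m, rfl⟩ : ∃ m, n₂ = n₁ + m := ⟨n₂ - n₁, by omega⟩
  obtain ⟨p, rfl⟩ : ∃ p, n₁ = m + p := ⟨n₁ - m, by omega⟩
  have e1 : m + p + m - (m + p) = m := by omega
  have e2 : 3 * (m + p) - (m + p + m) = m + 2*p := by omega
  have e3 : 2 * (m + p) - (m + p + m) = p := by omega
  rw [e1, e2, e3]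
  refine ⟨iotaMap k m p, iota_x k m p, iota_z k m p, by rw [iota_y],
    AlgEquiv.ofAlgHom (phiMap k m p) (psiMap k m p) (phi_comp_psi k m p) (psi_comp_phi k m p),
    fun r => by show phiMap k m p (Polynomial.C r) = _; rw [phiMap, Polynomial.aevalTower_C], ?_⟩
  show phiMap k m p Polynomial.X = _
  rw [phiMap, Polynomial.aevalTower_X, iota_z, sElt]

end
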